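/- Let s be a Hadamard matrix of order 4k (k > 1) with s_{i,1} = 1 for all i, and set ξ_i := {l : s_{li} = −1} for each column index i. Then for all pairwise distinct column indices i, j, l, all different from 1: |ξ_i Δ ξ_j Δ ξ_l| = 4·|ξ_i ∩ ξ_j ∩ ξ_l| and |ξ_i ∩ ξ_j ∩ ξ_l| = |ξ_i ∖ (ξ_j ∪ ξ_l)|, where Δ denotes the symmetric difference of sets. -/
import Mathlib


open scoped BigOperators symmDiff

/-- The set `ξ_i` of row indices where column `i` of `s` has entry `-1`. -/
def hadamardNegSet {n : ℕ} (s : Matrix (Fin n) (Fin n) ℤ) (i : Fin n) :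
    Finset (Fin n) :=
  Finset.univ.filter (fun l => s l i = -1)

lemma card_symmDiff_aux {α : Type*} [DecidableEq α] (A B : Finset α) :
    (A ∆ B).card + (A ∩ B).card + (A ∩ B).card = A.card + B.card := by
  rw [symmDiff_def, Finset.sup_eq_union,
    Finset.card_union_of_disjoint disjoint_sdiff_sdiff]
  have h1 := Finset.card_sdiff_add_card_inter A B
  have h2 := Finset.card_sdiff_add_card_inter B A
  rw [Finset.inter_comm B A] at h2
  omega

lemma half_card {n : ℕ} (f : Fin n → ℤ) (hf : ∀ l, f l = 1 ∨ f l = -1)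
    (h0 : ∑ l, f l = 0) :
    2 * (Finset.univ.filter (fun l => f l = -1)).card = n := by
  classical
  have hsplit := Finset.sum_filter_add_sum_filter_not Finset.univ
    (fun l => f l = -1) f
  have hA : ∑ l ∈ Finset.univ.filter (fun l => f l = -1), f l
      = -((Finset.univ.filter (fun l => f l = -1)).card : ℤ) := by
    rw [Finset.sum_congr rfl (fun l hl => (Finset.mem_filter.mp hl).2),
      Finset.sum_const]
    simp
  have hB : ∑ l ∈ Finset.univ.filter (fun l => ¬ f l = -1), f l
      = ((Finset.univ.filter (fun l => ¬ f l = -1)).card : ℤ) := by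
    have h1 : ∀ l ∈ Finset.univ.filter (fun l => ¬ f l = -1), f l = 1 :=
      fun l hl => (hf l).resolve_right (Finset.mem_filter.mp hl).2
    rw [Finset.sum_congr rfl h1, Finset.sum_const, nsmul_eq_mul, mul_one]
  have hcard := Finset.card_filter_add_card_filter_not
    (s := (Finset.univ : Finset (Fin n))) (p := fun l => f l = -1)
  rw [hA, hB, h0] at hsplit
  rw [Finset.card_univ, Fintype.card_fin] at hcard
  omega

lemma final_count {α : Type*} [DecidableEq α] (A B C : Finset α) (k : ℕ)
    (hA : 2 * A.card = 4 * k) (hB : 2 * B.card = 4 * k) (hC : 2 * C.card = 4 * k)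
    (hAB : 2 * (A ∆ B).card = 4 * k) (hAC : 2 * (A ∆ C).card = 4 * k)
    (hBC : 2 * (B ∆ C).card = 4 * k) :
    ((A ∆ B) ∆ C).card = 4 * (A ∩ B ∩ C).card ∧
      (A ∩ B ∩ C).card = (A \ (B ∪ C)).card := by
  have eAB := card_symmDiff_aux A B
  have eAC := card_symmDiff_aux A C
  have eBC := card_symmDiff_aux B C
  have hdist : (A ∆ B) ∩ C = (A ∩ C) ∆ (B ∩ C) := by
    have := inf_symmDiff_distrib_right A B C
    simpa [Finset.inf_eq_inter] using this
  have hACBC : (A ∩ C) ∩ (B ∩ C) = A ∩ B ∩ C := by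
    ext l
    simp only [Finset.mem_inter]
    tauto
  have e1 := card_symmDiff_aux (A ∩ C) (B ∩ C)
  rw [hACBC] at e1
  have e2 := card_symmDiff_aux (A ∆ B) C
  rw [hdist] at e2
  have e3 := Finset.card_sdiff_add_card_inter A (B ∪ C)
  have e4 := Finset.card_union_add_card_inter (A ∩ B) (A ∩ C)
  have hABAC : (A ∩ B) ∩ (A ∩ C) = A ∩ B ∩ C := by
    ext l
    simp only [Finset.mem_inter]
    tauto
  have hABACu : (A ∩ B) ∪ (A ∩ C) = A ∩ (B ∪ C) := by
    ext l
    simp only [Finset.mem_inter, Finset.mem_union]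
    tauto
  rw [hABAC, hABACu] at e4
  constructor <;> omega

/-- Let `s` be a Hadamard matrix of order `4k` (`k > 1`)
with first column all ones, and `ξ_i = {l : s l i = -1}`.  For pairwise
distinct column indices `i, j, m`, all different from the first one:
`|ξ_i Δ ξ_j Δ ξ_m| = 4·|ξ_i ∩ ξ_j ∩ ξ_m|` and
`|ξ_i ∩ ξ_j ∩ ξ_m| = |ξ_i ∖ (ξ_j ∪ ξ_m)|`. -/
theorem hadamard_negSet_symmDiff_card
    (k : ℕ) (hk : 1 < k)
    (s : Matrix (Fin (4 * k)) (Fin (4 * k)) ℤ)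
    (hpm : ∀ i j, s i j = 1 ∨ s i j = -1)
    (hH : s * s.transpose = (4 * (k : ℤ)) • 1)
    (h1 : ∀ i, s i ⟨0, by omega⟩ = 1)
    (i j m : Fin (4 * k))
    (hij : i ≠ j) (him : i ≠ m) (hjm : j ≠ m)
    (hi : i ≠ ⟨0, by omega⟩) (hj : j ≠ ⟨0, by omega⟩) (hm : m ≠ ⟨0, by omega⟩) :
    ((hadamardNegSet s i ∆ hadamardNegSet s j) ∆ hadamardNegSet s m).card =
       4 * (hadamardNegSet s i ∩ hadamardNegSet s j ∩ hadamardNegSet s m).card ∧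
    (hadamardNegSet s i ∩ hadamardNegSet s j ∩ hadamardNegSet s m).card =
       (hadamardNegSet s i \ (hadamardNegSet s j ∪ hadamardNegSet s m)).card := by
  classical
  set z0 : Fin (4 * k) := ⟨0, by omega⟩ with hz0
  set φ : Matrix (Fin (4*k)) (Fin (4*k)) ℤ →+* Matrix (Fin (4*k)) (Fin (4*k)) ℚ :=
    (Int.castRingHom ℚ).mapMatrix with hφ
  have hφinj : Function.Injective φ := by
    intro X Y h
    ext p q
    have := congrFun (congrFun h p) q
    simpa [hφ, Matrix.map_apply] using this
  have htr : ∀ X : Matrix (Fin (4*k)) (Fin (4*k)) ℤ,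
      φ X.transpose = (φ X).transpose := by
    intro X
    ext p q
    simp [hφ, Matrix.map_apply, Matrix.transpose_apply]
  set N : ℤ := 4 * (k : ℤ) with hN
  have hHmat : s * s.transpose = ((N : ℤ) : Matrix (Fin (4*k)) (Fin (4*k)) ℤ) := by
    rw [hH, ← Matrix.diagonal_intCast]
    ext p q
    simp only [Matrix.smul_apply, Matrix.one_apply, Matrix.diagonal_apply]
    split_ifs <;> simp
  have hQ : ((N : ℤ) : Matrix (Fin (4*k)) (Fin (4*k)) ℚ) = ((N : ℚ)) • 1 := by
    rw [← Matrix.diagonal_intCast]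
    ext p q
    simp only [Matrix.diagonal_apply, Matrix.smul_apply, Matrix.one_apply]
    split_ifs <;> simp
  have hknz : ((N : ℚ)) ≠ 0 := by
    rw [hN]
    push_cast
    positivity
  have hHq : φ s * (φ s).transpose = ((N : ℚ)) • 1 := by
    calc φ s * (φ s).transpose = φ (s * s.transpose) := by rw [map_mul, htr]
      _ = φ ((N : ℤ) : Matrix (Fin (4*k)) (Fin (4*k)) ℤ) := by rw [hHmat]
      _ = ((N : ℤ) : Matrix (Fin (4*k)) (Fin (4*k)) ℚ) := map_intCast φ N
      _ = ((N : ℚ)) • 1 := hQ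
  have h1q : φ s * (((N : ℚ))⁻¹ • (φ s).transpose) = 1 := by
    rw [Matrix.mul_smul, hHq, smul_smul, inv_mul_cancel₀ hknz, one_smul]
  have h2q := mul_eq_one_comm.mp h1q
  rw [Matrix.smul_mul] at h2q
  have hTq : (φ s).transpose * φ s = ((N : ℚ)) • 1 := by
    have := congrArg (fun M => ((N : ℚ)) • M) h2q
    simpa [smul_smul, mul_inv_cancel₀ hknz] using this
  have hT : s.transpose * s = ((N : ℤ) : Matrix (Fin (4*k)) (Fin (4*k)) ℤ) := by
    apply hφinj
    rw [map_mul, htr, map_intCast, hTq, hQ]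
  -- column orthogonality
  have horth : ∀ p q : Fin (4 * k), p ≠ q → ∑ l, s l p * s l q = 0 := by
    intro p q hpq
    have := congrFun (congrFun hT p) q
    rw [← Matrix.diagonal_intCast] at this
    simpa [Matrix.mul_apply, Matrix.transpose_apply, Matrix.diagonal_apply,
      hpq] using this
  -- size of each ξ
  have hcardξ : ∀ p : Fin (4 * k), p ≠ z0 →
      2 * (hadamardNegSet s p).card = 4 * k := by
    intro p hp
    have h0 : ∑ l, s l p = 0 := by
      have := horth p z0 hp
      simpa [h1] using this
    exact half_card (fun l => s l p) (fun l => hpm l p) h0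
  -- size of pairwise symmetric differences
  have hcardΔ : ∀ p q : Fin (4 * k), p ≠ q →
      2 * (hadamardNegSet s p ∆ hadamardNegSet s q).card = 4 * k := by
    intro p q hpq
    have hf : ∀ l, s l p * s l q = 1 ∨ s l p * s l q = -1 := by
      intro l
      rcases hpm l p with h | h <;> rcases hpm l q with h' | h' <;>
        simp [h, h']
    have h0 := horth p q hpq
    have hhalf := half_card (fun l => s l p * s l q) hf h0
    have hset : Finset.univ.filter (fun l => s l p * s l q = -1)
        = hadamardNegSet s p ∆ hadamardNegSet s q := by
      ext l
      simp only [Finset.mem_filter, Finset.mem_univ, true_and,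
        Finset.mem_symmDiff, hadamardNegSet]
      rcases hpm l p with h | h <;> rcases hpm l q with h' | h' <;>
        simp [h, h']
    rwa [hset] at hhalf
  exact final_count _ _ _ k (hcardξ i hi) (hcardξ j hj) (hcardξ m hm)
    (hcardΔ i j hij) (hcardΔ i m him) (hcardΔ j m hjm)
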